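/- For all reals s₁, s₂, s₃ > 0, all α > 0, and all positive weights p, q > 0, with u(x) = x^α / (e^{x^α} − 1) and v(x) = x^α / (1 − e^{−x^α}), the expression E = p²·u(s₁)u(s₂)·(v(s₂) − v(s₁)) + pq·u(s₁)u(s₃)·(v(s₃) − v(s₁)) + pq·u(s₃)u(s₂)·(v(s₂) − v(s₃)) is nonnegative whenever s₁ ≤ s₃ ≤ s₂ or s₁ ≤ s₂ ≤ s₃. -/

import Mathlib

open Real Set

/-! With `y = x ^ α`, `u = 1 / σ(y)` and `v = 1 / σ(-y)` for the secant slope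
`σ(y) = (e^y - 1) / y` of `exp` at `0`, which is positive and, by convexity of `exp`, monotone;
so `u` decreases and `v` increases on `(0, ∞)`. For `s₁ ≤ s₃ ≤ s₂` every term of the sum is then
nonnegative. For `s₁ ≤ s₂ ≤ s₃` the last two terms combine to
`pq·u(s₃)·(u(s₁)(v(s₃) - v(s₁)) - u(s₂)(v(s₃) - v(s₂)))`, and both factors of the first product
dominate those of the second. -/

lemma exp_sub_one_div_pos {x : ℝ} (hx : x ≠ 0) : 0 < (exp x - 1) / x := by
  rcases hx.lt_or_gt with hx | hx
  · exact div_pos_of_neg_of_neg (sub_neg.2 (exp_lt_one_iff.2 hx)) hx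
  · exact div_pos (sub_pos.2 (one_lt_exp_iff.2 hx)) hx

lemma exp_sub_one_div_le_of_le {x y : ℝ} (hx : x ≠ 0) (hy : y ≠ 0) (hxy : x ≤ y) :
    (exp x - 1) / x ≤ (exp y - 1) / y := by
  simpa using convexOn_exp.secant_mono (a := 0) (mem_univ 0) (mem_univ x) (mem_univ y) hx hy hxy

lemma div_exp_sub_one_pos {y : ℝ} (hy : 0 < y) : 0 < y / (exp y - 1) := by
  simpa only [inv_div] using inv_pos.2 (exp_sub_one_div_pos hy.ne')

lemma antitoneOn_div_exp_sub_one : AntitoneOn (fun y : ℝ => y / (exp y - 1)) (Ioi 0) := by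
  intro a ha b hb hab
  simpa only [inv_div] using inv_anti₀ (exp_sub_one_div_pos (ne_of_gt ha))
    (exp_sub_one_div_le_of_le (ne_of_gt ha) (ne_of_gt hb) hab)

lemma monotoneOn_div_one_sub_exp_neg : MonotoneOn (fun y : ℝ => y / (1 - exp (-y))) (Ioi 0) := by
  intro a ha b hb hab
  have hσ (y : ℝ) : y / (1 - exp (-y)) = ((exp (-y) - 1) / -y)⁻¹ := by
    rw [inv_div, neg_div, ← div_neg, neg_sub]
  simp only [hσ]
  exact inv_anti₀ (exp_sub_one_div_pos (neg_ne_zero.2 (ne_of_gt hb)))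
    (exp_sub_one_div_le_of_le (neg_ne_zero.2 (ne_of_gt hb)) (neg_ne_zero.2 (ne_of_gt ha))
      (neg_le_neg hab))

lemma mixed_difference_sum_nonneg {ι : Type*} [Preorder ι] {s : Set ι} {u v : ι → ℝ}
    (hu : AntitoneOn u s) (hu₀ : ∀ x ∈ s, 0 ≤ u x) (hv : MonotoneOn v s) {p q : ℝ}
    (hp : 0 ≤ p) (hq : 0 ≤ q) {a b c : ι} (ha : a ∈ s) (hb : b ∈ s) (hc : c ∈ s)
    (hord : (a ≤ c ∧ c ≤ b) ∨ (a ≤ b ∧ b ≤ c)) :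
    0 ≤ p ^ 2 * (u a * u b * (v b - v a)) + p * q * (u a * u c * (v c - v a)) +
      p * q * (u c * u b * (v b - v c)) := by
  have hua := hu₀ a ha
  have hub := hu₀ b hb
  have huc := hu₀ c hc
  rcases hord with ⟨hac, hcb⟩ | ⟨hab, hbc⟩
  · have hvab := sub_nonneg.2 (hv ha hb (hac.trans hcb))
    have hvac := sub_nonneg.2 (hv ha hc hac)
    have hvcb := sub_nonneg.2 (hv hc hb hcb)
    positivity
  · have hvab := sub_nonneg.2 (hv ha hb hab)
    have hcross : u b * (v c - v b) ≤ u a * (v c - v a) :=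
      mul_le_mul (hu ha hb hab) (by linarith [hv ha hb hab])
        (sub_nonneg.2 (hv hb hc hbc)) hua
    have hcross' := sub_nonneg.2 hcross
    calc 0 ≤ p ^ 2 * (u a * u b * (v b - v a)) +
          p * q * u c * (u a * (v c - v a) - u b * (v c - v b)) := by positivity
      _ = _ := by ring

/-- For `s₁, s₂, s₃ > 0`, `α > 0` and positive weights `p, q`, with
`u(x) = x^α / (e^{x^α} − 1)` and `v(x) = x^α / (1 − e^{−x^α})`, the expression
`p²·u(s₁)u(s₂)(v(s₂) − v(s₁)) + pq·u(s₁)u(s₃)(v(s₃) − v(s₁)) + pq·u(s₃)u(s₂)(v(s₂) − v(s₃))`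
is nonnegative whenever `s₁ ≤ s₃ ≤ s₂` or `s₁ ≤ s₂ ≤ s₃`. -/
theorem multiple_outlier_weibull_rhr_ratio_key_sign (α s₁ s₂ s₃ p q : ℝ) (hα : 0 < α)
    (hs₁ : 0 < s₁) (hs₂ : 0 < s₂) (hs₃ : 0 < s₃) (hp : 0 < p) (hq : 0 < q)
    (hord : (s₁ ≤ s₃ ∧ s₃ ≤ s₂) ∨ (s₁ ≤ s₂ ∧ s₂ ≤ s₃)) :
    0 ≤
      p ^ 2 * ((s₁ ^ α / (exp (s₁ ^ α) - 1)) * (s₂ ^ α / (exp (s₂ ^ α) - 1)) *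
          (s₂ ^ α / (1 - exp (-(s₂ ^ α))) - s₁ ^ α / (1 - exp (-(s₁ ^ α))))) +
        p * q * ((s₁ ^ α / (exp (s₁ ^ α) - 1)) * (s₃ ^ α / (exp (s₃ ^ α) - 1)) *
          (s₃ ^ α / (1 - exp (-(s₃ ^ α))) - s₁ ^ α / (1 - exp (-(s₁ ^ α))))) +
        p * q * ((s₃ ^ α / (exp (s₃ ^ α) - 1)) * (s₂ ^ α / (exp (s₂ ^ α) - 1)) *
          (s₂ ^ α / (1 - exp (-(s₂ ^ α))) - s₃ ^ α / (1 - exp (-(s₃ ^ α))))) := by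
  have hpow : MonotoneOn (fun x : ℝ => x ^ α) (Ioi 0) :=
    (monotoneOn_rpow_Ici_of_exponent_nonneg hα.le).mono Ioi_subset_Ici_self
  have hmaps : MapsTo (fun x : ℝ => x ^ α) (Ioi 0) (Ioi 0) := fun x hx => rpow_pos_of_pos hx α
  have hu : AntitoneOn (fun x : ℝ => x ^ α / (exp (x ^ α) - 1)) (Ioi 0) :=
    fun a ha b hb hab => antitoneOn_div_exp_sub_one (hmaps ha) (hmaps hb) (hpow ha hb hab)
  have hv : MonotoneOn (fun x : ℝ => x ^ α / (1 - exp (-(x ^ α)))) (Ioi 0) :=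
    fun a ha b hb hab => monotoneOn_div_one_sub_exp_neg (hmaps ha) (hmaps hb) (hpow ha hb hab)
  exact mixed_difference_sum_nonneg hu (fun x hx => (div_exp_sub_one_pos (hmaps hx)).le) hv
    hp.le hq.le hs₁ hs₂ hs₃ hord
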